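/- For all n, m, k, r ≥ 0, G_{a,b}(n+m,k;r) = Σ_{i=0}^{n} Σ_{j=0}^{m} C(n,i) · G_{a,b}(m,j;r) · G_{a,b}(i,k−j;0) · ∏_{ℓ=0}^{n−i−1}(a·ℓ + a·(m+r) + b·(j+r)), where terms with j > k are interpreted as zero (i.e., G_{a,b}(i,k−j;0)=0 when j > k). -/

import Mathlib

/-!
Fix `m` and expand along the last `n` steps of the recurrence. For each `j`, the inner sum
`W_j(n, k) = ∑ᵢ C(n,i) G(i, k-j; 0) ∏_{ℓ<n-i} (aℓ + c_j)` obeys, by Pascal's rule, the recurrence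
`W_j(n+1, k) = W_j(n, k-1) + (a n + c_j + b (k - j)) W_j(n, k)`, and for `c_j = a(m+r) + b(j+r)`
the coefficient `a(n+m) + b k + (a+b) r` no longer depends on `j`. So `∑ⱼ G(m,j;r) W_j(n,k)`
satisfies the recurrence of `G(n+m, k; r)` in `n`, with the same initial values at `n = 0`.
-/

open Finset

/-- The generalized r-Lah numbers `G_{a,b}(n,k;r)`. -/
def genLah {R : Type*} [CommRing R] (a b : R) (r : ℕ) : ℕ → ℕ → R
  | 0, 0 => 1
  | 0, _ + 1 => 0
  | n + 1, 0 => (a * ((n : R) + (r : R)) + b * (r : R)) * genLah a b r n 0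
  | n + 1, k + 1 => genLah a b r n k +
      (a * (n : R) + b * ((k : R) + 1) + (a + b) * (r : R)) * genLah a b r n (k + 1)

section

variable {R : Type*} [CommRing R] (a b : R)

theorem genLah_eq_zero_of_lt (r : ℕ) {n k : ℕ} (h : n < k) : genLah a b r n k = 0 := by
  induction n generalizing k with
  | zero => obtain ⟨k, rfl⟩ := Nat.exists_eq_succ_of_ne_zero (by omega : k ≠ 0); rfl
  | succ n ih =>
    obtain ⟨k, rfl⟩ := Nat.exists_eq_succ_of_ne_zero (by omega : k ≠ 0)
    simp only [genLah, ih (by omega : n < k), ih (by omega : n < k + 1), mul_zero, add_zero]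

theorem genLah_succ_left (r n k : ℕ) :
    genLah a b r (n + 1) k =
      (if k = 0 then 0 else genLah a b r n (k - 1)) +
        (a * n + b * k + (a + b) * r) * genLah a b r n k := by
  cases k with
  | zero => simp only [genLah, if_true, zero_add, Nat.cast_zero]; ring
  | succ k => simp only [genLah, Nat.add_one_ne_zero, if_false, add_tsub_cancel_right]; push_cast; ring

def shiftedLah (j i k : ℕ) : R :=
  if j ≤ k then genLah a b 0 i (k - j) else 0

theorem shiftedLah_zero_left (j k : ℕ) : shiftedLah a b j 0 k = if j = k then 1 else 0 := by
  unfold shiftedLah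
  split_ifs with hjk hjk_eq hjk_eq
  · subst hjk_eq; rw [Nat.sub_self]; rfl
  · obtain ⟨d, hd⟩ := Nat.exists_eq_add_of_lt (lt_of_le_of_ne hjk hjk_eq)
    rw [hd, show j + d + 1 - j = d + 1 by omega]; rfl
  · omega
  · rfl

theorem shiftedLah_succ_left (j i k : ℕ) :
    shiftedLah a b j (i + 1) k =
      (if k = 0 then 0 else shiftedLah a b j i (k - 1)) +
        (a * i + b * ((k : R) - j)) * shiftedLah a b j i k := by
  unfold shiftedLah
  by_cases hjk : j ≤ k
  · rw [if_pos hjk, if_pos hjk, genLah_succ_left]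
    obtain rfl | hlt := eq_or_lt_of_le hjk
    · rcases j with _ | j <;> simp
    · rw [if_neg (by omega), if_neg (by omega), if_pos (by omega : j ≤ k - 1),
        show k - j - 1 = k - 1 - j by omega, Nat.cast_sub hjk]
      ring
  · simp [hjk, show ¬j ≤ k - 1 by omega]

/-- `W_j(n, k)` of the header, with `c_j` replaced by an arbitrary `c`. -/
def binomialLahSum (c : R) (j n k : ℕ) : R :=
  ∑ i ∈ range (n + 1), (n.choose i : R) * shiftedLah a b j i k *
    ∏ l ∈ range (n - i), (a * l + c)

theorem binomialLahSum_zero_left (c : R) (j k : ℕ) :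
    binomialLahSum a b c j 0 k = if j = k then 1 else 0 := by
  simp [binomialLahSum, shiftedLah_zero_left]

theorem binomialLahSum_succ_left (c : R) (j n k : ℕ) :
    binomialLahSum a b c j (n + 1) k =
      (if k = 0 then 0 else binomialLahSum a b c j n (k - 1)) +
        (a * n + c + b * ((k : R) - j)) * binomialLahSum a b c j n k := by
  have hpascal := sum_choose_succ_mul
    (fun i t => shiftedLah a b j i k * ∏ l ∈ range t, (a * l + c)) n
  simp only [← mul_assoc] at hpascal
  have hterm : ∀ i ∈ range (n + 1),
      (n.choose i : R) * shiftedLah a b j i k * ∏ l ∈ range (n + 1 - i), (a * l + c) +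
          (n.choose i : R) * shiftedLah a b j (i + 1) k * ∏ l ∈ range (n - i), (a * l + c) =
        (if k = 0 then 0 else
            (n.choose i : R) * shiftedLah a b j i (k - 1) * ∏ l ∈ range (n - i), (a * l + c)) +
          (a * n + c + b * ((k : R) - j)) *
            ((n.choose i : R) * shiftedLah a b j i k * ∏ l ∈ range (n - i), (a * l + c)) := by
    intro i hi
    have hin : i ≤ n := Nat.lt_succ_iff.mp (mem_range.mp hi)
    rw [Nat.sub_add_comm hin, prod_range_succ, shiftedLah_succ_left, Nat.cast_sub hin]
    split_ifs <;> ring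
  rw [binomialLahSum, hpascal, ← sum_add_distrib, sum_congr rfl hterm, sum_add_distrib,
    ← mul_sum]
  split_ifs <;> simp [binomialLahSum]

theorem genLah_add_eq_sum_binomialLahSum (r n m k : ℕ) :
    genLah a b r (n + m) k =
      ∑ j ∈ range (m + 1), genLah a b r m j *
        binomialLahSum a b (a * ((m : R) + r) + b * ((j : R) + r)) j n k := by
  induction n generalizing k with
  | zero =>
    simp only [zero_add, binomialLahSum_zero_left, mul_ite, mul_one, mul_zero, sum_ite_eq',
      mem_range]
    split_ifs with hk
    · rfl
    · exact genLah_eq_zero_of_lt a b r (by omega)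
  | succ n ih =>
    rw [Nat.add_right_comm, genLah_succ_left, ih, ih]
    simp only [binomialLahSum_succ_left, mul_add, sum_add_distrib, mul_sum]
    congr 1
    · split_ifs <;> simp
    · refine sum_congr rfl fun j _ => ?_
      push_cast
      ring

end

theorem genLah_add_formula {R : Type*} [CommRing R] (a b : R) (r n m k : ℕ) :
    genLah a b r (n + m) k =
      ∑ i ∈ range (n + 1), ∑ j ∈ range (m + 1),
        (n.choose i : R) * genLah a b r m j *
          (if j ≤ k then genLah a b 0 i (k - j) else 0) *
          ∏ l ∈ range (n - i), (a * (l : R) + a * ((m : R) + (r : R)) + b * ((j : R) + (r : R))) := by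
  rw [genLah_add_eq_sum_binomialLahSum, sum_comm]
  refine sum_congr rfl fun j _ => ?_
  rw [binomialLahSum, mul_sum]
  refine sum_congr rfl fun i _ => ?_
  simp only [shiftedLah, add_assoc]
  ring
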